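/- Assuming that g(ρ(n), ρ(n), ν) > 0 for every partition ν of n(n+1)/2 dominated by ρ(n), that Kronecker coefficients satisfy the semigroup property under part-wise addition, and that g((1ⁿ), (1ⁿ), (n)) > 0, it follows by induction on n that g(ρ(n), ρ(n), ν) > 0 for every hook partition ν of n(n+1)/2. -/

import Mathlib

/-- `f` is a partition of `d`. -/
def IsPartitionOf (d : ℕ) (f : ℕ → ℕ) : Prop :=
  (∀ i j, i ≤ j → f j ≤ f i) ∧
  ∃ N, (∀ i, N ≤ i → f i = 0) ∧ ∑ i ∈ Finset.range N, f i = d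

/-- `f` dominates `g`. -/
def Dominates (f g : ℕ → ℕ) : Prop :=
  ∀ k, ∑ i ∈ Finset.range k, g i ≤ ∑ i ∈ Finset.range k, f i

/-- The staircase partition `ρ(n) = (n, n-1, ..., 1)`. -/
def staircase (n : ℕ) : ℕ → ℕ := fun i => n - i

/-- The single-column partition `(1ⁿ)`. -/
def column (n : ℕ) : ℕ → ℕ := fun i => if i < n then 1 else 0

/-- The single-row partition `(n)`. -/
def row (n : ℕ) : ℕ → ℕ := fun i => if i = 0 then n else 0

/-- The hook partition `(a, 1^b)`. -/
def hook (a b : ℕ) : ℕ → ℕ := fun i => if i = 0 then a else if i ≤ b then 1 else 0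

/-- `ν` is a hook partition. -/
def IsHook (ν : ℕ → ℕ) : Prop := ∃ a b, 1 ≤ a ∧ ν = hook a b

/-!
Induction on `n`. A hook `(a, 1^b)` with `a ≤ n` is dominated by `ρ(n)`, so its coefficient is
positive by hypothesis. If `a > n`, then `(a - n, 1^b)` is a hook of `n(n-1)/2`, and adding
`(ρ(n-1), ρ(n-1), (a - n, 1^b))` and `((1ⁿ), (1ⁿ), (n))` part-wise gives `(ρ(n), ρ(n), (a, 1^b))`,
so the semigroup property carries positivity over from `n - 1`.
-/

open Finset

lemma IsPartitionOf.sum_range_eq {d : ℕ} {f : ℕ → ℕ} (hf : IsPartitionOf d f) {M : ℕ}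
    (hM : ∀ i ≥ M, f i = 0) : ∑ i ∈ range M, f i = d := by
  obtain ⟨-, N, hN, rfl⟩ := hf
  rw [← eventually_constant_sum hM (le_max_left M N),
    ← eventually_constant_sum hN (le_max_right M N)]

lemma hook_eq_zero {a b i : ℕ} (hi : b < i) : hook a b i = 0 := by
  simp only [hook]
  split_ifs <;> omega

lemma sum_range_hook (a b : ℕ) : ∑ i ∈ range (b + 1), hook a b i = a + b := by
  have htail : ∀ i ∈ range b, hook a b (i + 1) = 1 := fun i hi => by
    simp [hook, Nat.succ_le_of_lt (mem_range.mp hi)]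
  rw [sum_range_succ', sum_congr rfl htail]
  simp [hook, add_comm]

lemma sum_range_hook_le (a b k : ℕ) : ∑ i ∈ range k, hook a b i ≤ a + b :=
  calc ∑ i ∈ range k, hook a b i
      ≤ ∑ i ∈ range (max k (b + 1)), hook a b i :=
        sum_le_sum_of_subset (range_subset_range.mpr (le_max_left _ _))
    _ = a + b := by
        rw [eventually_constant_sum (fun i hi => hook_eq_zero hi) (le_max_right _ _),
          sum_range_hook]

lemma IsPartitionOf.hook_size {d a b : ℕ} (h : IsPartitionOf d (hook a b)) : a + b = d := by
  rw [← sum_range_hook, h.sum_range_eq fun i hi => hook_eq_zero hi]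

lemma isPartitionOf_hook {a b : ℕ} (ha : 1 ≤ a) : IsPartitionOf (a + b) (hook a b) := by
  refine ⟨fun i j hij => ?_, b + 1, fun i hi => hook_eq_zero hi, sum_range_hook a b⟩
  simp only [hook]
  split_ifs <;> omega

lemma sum_range_staircase {n k : ℕ} (hk : n ≤ k) :
    ∑ i ∈ range k, staircase n i = n * (n + 1) / 2 := by
  have hvanish : ∀ i ≥ n, staircase n i = 0 := fun i hi => by simp only [staircase]; omega
  calc ∑ i ∈ range k, staircase n i
      = ∑ i ∈ range (n + 1), staircase n i := by
        rw [eventually_constant_sum hvanish hk, eventually_constant_sum hvanish n.le_succ]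
    _ = ∑ i ∈ range (n + 1), i := by simpa [staircase] using sum_range_reflect id (n + 1)
    _ = n * (n + 1) / 2 := by rw [sum_range_id, Nat.add_sub_cancel, mul_comm]

lemma staircase_dominates_hook {n a b : ℕ} (ha : a ≤ n) (hab : a + b = n * (n + 1) / 2) :
    Dominates (staircase n) (hook a b) := by
  intro k
  rcases le_or_gt k n with hk | hk
  · refine sum_le_sum fun i hi => ?_
    simp only [hook, staircase, mem_range] at hi ⊢
    split_ifs <;> omega
  · rw [sum_range_staircase hk.le, ← hab]
    exact sum_range_hook_le a b k

lemma staircase_add_column (n : ℕ) :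
    (fun i => staircase n i + column (n + 1) i) = staircase (n + 1) := by
  funext i
  simp only [staircase, column]
  split_ifs <;> omega

lemma hook_add_row (a b n : ℕ) : (fun i => hook a b i + row n i) = hook (a + n) b := by
  funext i
  simp only [hook, row]
  split_ifs <;> omega

/-- Saxl conjecture for hooks.  Assume `g` (the Kronecker coefficient) is positive
on `(ρ(n), ρ(n), ν)` whenever `ν` is a partition of `n(n+1)/2` dominated by
`ρ(n)`, that `g` satisfies the semigroup property under part-wise addition, and
that `g((1ⁿ), (1ⁿ), (n)) > 0`.  Then `g(ρ(n), ρ(n), ν) > 0` for every hook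
partition `ν` of `n(n+1)/2`. -/
theorem saxl_for_hooks
    (g : (ℕ → ℕ) → (ℕ → ℕ) → (ℕ → ℕ) → ℕ)
    (hdom : ∀ n ν, IsPartitionOf (n * (n + 1) / 2) ν →
      Dominates (staircase n) ν → 0 < g (staircase n) (staircase n) ν)
    (hsemi : ∀ l m ν l' m' ν', 0 < g l m ν → 0 < g l' m' ν' →
      0 < g (fun i => l i + l' i) (fun i => m i + m' i) (fun i => ν i + ν' i))
    (hcol : ∀ n, 0 < g (column n) (column n) (row n)) :
    ∀ n ν, IsPartitionOf (n * (n + 1) / 2) ν → IsHook ν →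
      0 < g (staircase n) (staircase n) ν := by
  intro n
  induction n with
  | zero =>
    rintro ν hp ⟨a, b, ha, rfl⟩
    have := hp.hook_size
    omega
  | succ n ih =>
    rintro ν hp ⟨a, b, ha, rfl⟩
    have hab := hp.hook_size
    rcases le_or_gt a (n + 1) with hle | hgt
    · exact hdom _ _ hp (staircase_dominates_hook hle hab)
    obtain ⟨c, rfl⟩ : ∃ c, a = c + (n + 1) := ⟨a - (n + 1), by omega⟩
    have hc : c + b = n * (n + 1) / 2 := by
      rw [show (n + 1) * (n + 1 + 1) = n * (n + 1) + 2 * (n + 1) by ring] at hab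
      omega
    have hsmall := ih _ (hc ▸ isPartitionOf_hook (by omega)) ⟨c, b, by omega, rfl⟩
    have hsum := hsemi _ _ _ _ _ _ hsmall (hcol (n + 1))
    rwa [staircase_add_column, hook_add_row] at hsum
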